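/- arXiv:2309.06563 — 3 statements merged into one kernel-verified Lean document; each statement's English description precedes it below -/
import Mathlib

section
/- Let H be the Euclidean ball of radius R > 0 centered at the origin in ℝ^J, and let K = {(Θ, ϱ) ∈ S^J_+ × ℝ_+ : Tr(Θ) ≤ R² ϱ}. Then: (i) for any h₁,...,h_J ∈ H and υ ∈ ℝ^J_+, the pair (Σ_j υ_j h_j h_j^T, Σ_j υ_j) belongs to K; and (ii) conversely, for any (Θ, ϱ) ∈ K there exist h_j ∈ H and υ_j ≥ 0, j ≤ J, with Θ = Σ_j υ_j h_j h_j^T and Σ_j υ_j ≤ ϱ. -/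
/-!
(i) Each term `υ j • h j h jᵀ` is positive semidefinite with trace `υ j ‖h j‖² ≤ υ j R²`.
(ii) Write `Θ = Bᵀ B = ∑ₖ bₖ bₖᵀ` with `bₖ` the rows of a square root `B` of `Θ`, and replace
each `bₖ bₖᵀ` by `(‖bₖ‖² / R²) hₖ hₖᵀ` where `hₖ` is `bₖ` rescaled to length `R`; the weights
then sum to `tr Θ / R² ≤ ϱ`.
-/

open Matrix

namespace Matrix

variable {ι m n : Type*}

theorem transpose_mul_self_eq_sum_vecMulVec [Fintype m] {R : Type*} [CommSemiring R]
    (B : Matrix m n R) : Bᵀ * B = ∑ k, vecMulVec (B k) (B k) := by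
  ext i j
  simp only [mul_apply, transpose_apply, sum_apply, vecMulVec_apply]

variable [Fintype n]

theorem PosSemidef.exists_eq_sum_vecMulVec_self {A : Matrix n n ℝ} (hA : A.PosSemidef) :
    ∃ b : n → n → ℝ, A = ∑ k, vecMulVec (b k) (b k) := by
  classical
  open scoped MatrixOrder in
  obtain ⟨B, rfl⟩ := CStarAlgebra.nonneg_iff_eq_star_mul_self.mp hA.nonneg
  exact ⟨B, by rw [star_eq_conjTranspose, conjTranspose_eq_transpose_of_trivial,
    transpose_mul_self_eq_sum_vecMulVec]⟩

variable [Fintype ι]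

theorem trace_sum_smul_vecMulVec_self {R : Type*} [CommSemiring R] (υ : ι → R)
    (h : ι → n → R) :
    (∑ j, υ j • vecMulVec (h j) (h j)).trace = ∑ j, υ j * (h j ⬝ᵥ h j) := by
  simp only [trace_sum, trace_smul, trace_vecMulVec, smul_eq_mul]

theorem posSemidef_sum_smul_vecMulVec_self {υ : ι → ℝ} (hυ : ∀ j, 0 ≤ υ j) (h : ι → n → ℝ) :
    (∑ j, υ j • vecMulVec (h j) (h j)).PosSemidef :=
  posSemidef_sum _ fun j _ => by
    simpa only [star_trivial] using (posSemidef_vecMulVec_self_star (h j)).smul (hυ j)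

end Matrix

section Rescale

variable {n : Type*} [Fintype n]

theorem dotProduct_self_nonneg (b : n → ℝ) : 0 ≤ b ⬝ᵥ b :=
  Finset.sum_nonneg fun i _ => mul_self_nonneg (b i)

-- The zero vector is sent to zero, since `R / √0 = 0`.
noncomputable def rescaleToLength (R : ℝ) (b : n → ℝ) : n → ℝ := (R / √(b ⬝ᵥ b)) • b

theorem dotProduct_rescaleToLength_self (R : ℝ) (b : n → ℝ) :
    rescaleToLength R b ⬝ᵥ rescaleToLength R b = R ^ 2 / (b ⬝ᵥ b) * (b ⬝ᵥ b) := by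
  rw [rescaleToLength, smul_dotProduct, dotProduct_smul, smul_eq_mul, smul_eq_mul, ← mul_assoc,
    ← sq, div_pow, Real.sq_sqrt (dotProduct_self_nonneg b)]

theorem sqrt_dotProduct_rescaleToLength_self_le {R : ℝ} (hR : 0 ≤ R) (b : n → ℝ) :
    √(rescaleToLength R b ⬝ᵥ rescaleToLength R b) ≤ R := by
  rw [Real.sqrt_le_left hR, dotProduct_rescaleToLength_self]
  rcases eq_or_ne (b ⬝ᵥ b) 0 with hb | hb
  · rw [hb, mul_zero]
    positivity
  · rw [div_mul_cancel₀ _ hb]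

theorem smul_vecMulVec_rescaleToLength {R : ℝ} (hR : R ≠ 0) (b : n → ℝ) :
    (b ⬝ᵥ b / R ^ 2) • vecMulVec (rescaleToLength R b) (rescaleToLength R b) = vecMulVec b b := by
  rcases eq_or_ne b 0 with rfl | hb
  · simp [rescaleToLength]
  have hbb : b ⬝ᵥ b ≠ 0 := dotProduct_self_eq_zero.not.mpr hb
  have hsqrt : √(b ⬝ᵥ b) ^ 2 = b ⬝ᵥ b := Real.sq_sqrt (dotProduct_self_nonneg b)
  have hscalar : b ⬝ᵥ b / R ^ 2 * (R / √(b ⬝ᵥ b)) * (R / √(b ⬝ᵥ b)) = 1 := by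
    rw [mul_assoc, ← sq, div_pow, hsqrt]
    field_simp
  rw [rescaleToLength, smul_vecMulVec, vecMulVec_smul, smul_smul, smul_smul, hscalar, one_smul]

end Rescale

theorem Matrix.PosSemidef.exists_eq_sum_smul_vecMulVec_of_sqrt_le {n : Type*} [Fintype n]
    {A : Matrix n n ℝ} (hA : A.PosSemidef) {R : ℝ} (hR : 0 < R) :
    ∃ (h : n → n → ℝ) (υ : n → ℝ), (∀ j, √(h j ⬝ᵥ h j) ≤ R) ∧ (∀ j, 0 ≤ υ j) ∧
      A = ∑ j, υ j • vecMulVec (h j) (h j) ∧ ∑ j, υ j = A.trace / R ^ 2 := by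
  obtain ⟨b, rfl⟩ := hA.exists_eq_sum_vecMulVec_self
  refine ⟨fun j => rescaleToLength R (b j), fun j => b j ⬝ᵥ b j / R ^ 2,
    fun j => sqrt_dotProduct_rescaleToLength_self_le hR.le (b j),
    fun j => by positivity [dotProduct_self_nonneg (b j)], ?_, ?_⟩
  · simp only [smul_vecMulVec_rescaleToLength hR.ne']
  · simp only [trace_sum, trace_vecMulVec, Finset.sum_div]

theorem ball_cone_compatible {J : ℕ} (R : ℝ) (hR : 0 < R) :
    (∀ (h : Fin J → Fin J → ℝ) (υ : Fin J → ℝ),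
      (∀ j, Real.sqrt (h j ⬝ᵥ h j) ≤ R) → (∀ j, 0 ≤ υ j) →
      (∑ j, υ j • Matrix.vecMulVec (h j) (h j)).PosSemidef ∧
        (∑ j, υ j • Matrix.vecMulVec (h j) (h j)).trace ≤ R ^ 2 * ∑ j, υ j) ∧
    (∀ (Θ : Matrix (Fin J) (Fin J) ℝ) (ϱ : ℝ),
      Θ.PosSemidef → 0 ≤ ϱ → Θ.trace ≤ R ^ 2 * ϱ →
      ∃ (h : Fin J → Fin J → ℝ) (υ : Fin J → ℝ),
        (∀ j, Real.sqrt (h j ⬝ᵥ h j) ≤ R) ∧ (∀ j, 0 ≤ υ j) ∧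
          Θ = ∑ j, υ j • Matrix.vecMulVec (h j) (h j) ∧ (∑ j, υ j) ≤ ϱ) := by
  refine ⟨fun h υ hh hυ => ⟨posSemidef_sum_smul_vecMulVec_self hυ h, ?_⟩,
    fun Θ ϱ hΘ _ htr => ?_⟩
  · rw [trace_sum_smul_vecMulVec_self, Finset.mul_sum]
    refine Finset.sum_le_sum fun j _ => ?_
    rw [mul_comm (R ^ 2)]
    exact mul_le_mul_of_nonneg_left (Real.sqrt_le_iff.mp (hh j)).2 (hυ j)
  · obtain ⟨h, υ, hh, hυ, rfl, hsum⟩ := hΘ.exists_eq_sum_smul_vecMulVec_of_sqrt_le hR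
    refine ⟨h, υ, hh, hυ, rfl, ?_⟩
    rw [hsum, div_le_iff₀ (by positivity), mul_comm]
    exact htr
end

section
/- Let H = {g ∈ ℝ^N : ∃ r ∈ R, S_i[g]² ⪯ r_i I_{d_i}, i ≤ I} be a basic spectratope with S_i[g] = Σ_j g_j S^{ij} linear in g, and define K = {(Σ, ρ) ∈ S^N_+ × ℝ_+ : ∃ r ∈ R, S_i[Σ] ⪯ ρ r_i I_{d_i}, i ≤ I}, where S_i[G] = Σ_{p,q} G_{pq} S^{ip} S^{iq}. Then whenever Σ = Σ_j λ_j g_j g_j^T with λ_j ≥ 0 and g_j ∈ H for all j, one has (Σ, Σ_j λ_j) ∈ K. -/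
/-!
The lifting `G ↦ S_i[G]` is linear and sends `g gᵀ` to `S_i[g]²`, so
`S_i[Σ] = ∑ λ_j S_i[g_j]² ⪯ (∑ λ_j r^j_i) I` where `r^j ∈ R` certifies `g_j ∈ H`.
With `ρ = ∑ λ_j`, the vector `∑ λ_j r^j` is `ρ` times the barycenter of the `r^j`, which lies
in `R` by convexity; when `ρ = 0` any point of `R` will do.
-/

open Matrix

theorem Convex.exists_mem_sum_smul_eq_sum_smul {E ι : Type*} [AddCommGroup E] [Module ℝ E]
    {s : Set E} (hs : Convex ℝ s) (hne : s.Nonempty) {t : Finset ι} {w : ι → ℝ} {z : ι → E}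
    (hw : ∀ i ∈ t, 0 ≤ w i) (hz : ∀ i ∈ t, z i ∈ s) :
    ∃ x ∈ s, (∑ i ∈ t, w i) • x = ∑ i ∈ t, w i • z i := by
  rcases (Finset.sum_nonneg hw).eq_or_lt with hzero | hpos
  · have hw0 : ∀ i ∈ t, w i = 0 := (Finset.sum_eq_zero_iff_of_nonneg hw).mp hzero.symm
    obtain ⟨x, hx⟩ := hne
    refine ⟨x, hx, ?_⟩
    rw [← hzero, zero_smul, Finset.sum_eq_zero fun i hi => by rw [hw0 i hi, zero_smul]]
  · exact ⟨t.centerMass w z, hs.centerMass_mem hw hpos hz, smul_inv_smul₀ hpos.ne' _⟩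

namespace Matrix

variable {m n : Type*} [Fintype m] [Fintype n] {R : Type*} [CommRing R]

def quadLift (S : n → Matrix m m R) : Matrix n n R →ₗ[R] Matrix m m R where
  toFun G := ∑ p, ∑ q, G p q • (S p * S q)
  map_add' G G' := by simp only [add_apply, add_smul, Finset.sum_add_distrib]
  map_smul' c G := by
    simp only [smul_apply, smul_eq_mul, mul_smul, Finset.smul_sum, RingHom.id_apply]

theorem quadLift_apply (S : n → Matrix m m R) (G : Matrix n n R) :
    quadLift S G = ∑ p, ∑ q, G p q • (S p * S q) := rfl

theorem quadLift_vecMulVec (S : n → Matrix m m R) (g : n → R) :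
    quadLift S (vecMulVec g g) = (∑ p, g p • S p) * (∑ p, g p • S p) := by
  simp only [quadLift_apply, vecMulVec_apply, Finset.sum_mul_sum, smul_mul_smul_comm]

end Matrix

theorem Matrix.PosSemidef.sum_smul_sub {ι m : Type*} [Fintype m] [DecidableEq m]
    {t : Finset ι} {w c : ι → ℝ} {A : ι → Matrix m m ℝ} (hw : ∀ i ∈ t, 0 ≤ w i)
    (h : ∀ i ∈ t, (c i • (1 : Matrix m m ℝ) - A i).PosSemidef) :
    ((∑ i ∈ t, w i * c i) • (1 : Matrix m m ℝ) - ∑ i ∈ t, w i • A i).PosSemidef := by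
  have hsum : (∑ i ∈ t, w i * c i) • (1 : Matrix m m ℝ) - ∑ i ∈ t, w i • A i =
      ∑ i ∈ t, w i • (c i • (1 : Matrix m m ℝ) - A i) := by
    simp only [smul_sub, smul_smul, Finset.sum_sub_distrib, Finset.sum_smul]
  rw [hsum]
  exact posSemidef_sum t fun i hi => (h i hi).smul (hw i hi)

theorem spectratope_cone_compat_i_general {N I M : ℕ}
    (d : Fin I → ℕ)
    (S : (i : Fin I) → Fin N → Matrix (Fin (d i)) (Fin (d i)) ℝ)
    (R : Set (Fin I → ℝ)) (hRconv : Convex ℝ R)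
    (hRint : (interior R).Nonempty)
    (lam : Fin M → ℝ) (g : Fin M → Fin N → ℝ)
    (hlam : ∀ j, 0 ≤ lam j)
    (hg : ∀ j, ∃ r ∈ R, ∀ i,
      ((r i • (1 : Matrix (Fin (d i)) (Fin (d i)) ℝ)) -
        (∑ p, g j p • S i p) * (∑ p, g j p • S i p)).PosSemidef) :
    (∑ j, lam j • Matrix.vecMulVec (g j) (g j)).PosSemidef ∧
      ∃ r ∈ R, ∀ i,
        (((∑ j, lam j) * r i) • (1 : Matrix (Fin (d i)) (Fin (d i)) ℝ) -
          ∑ p, ∑ q, (∑ j, lam j • Matrix.vecMulVec (g j) (g j)) p q • (S i p * S i q)).PosSemidef := by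
  choose r hrR hr using hg
  obtain ⟨r₀, hr₀R, hr₀⟩ := hRconv.exists_mem_sum_smul_eq_sum_smul (hRint.mono interior_subset)
    (fun j _ => hlam j) (fun j _ => hrR j)
  refine ⟨posSemidef_sum _ fun j _ => (posSemidef_vecMulVec_self_star (g j)).smul (hlam j),
    r₀, hr₀R, fun i => ?_⟩
  have hr₀i : (∑ j, lam j) * r₀ i = ∑ j, lam j * r j i := by
    simpa using congrFun hr₀ i
  rw [hr₀i, ← quadLift_apply, map_sum]
  simp only [map_smul, quadLift_vecMulVec]
  exact PosSemidef.sum_smul_sub (fun j _ => hlam j) fun j _ => hr j i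

theorem spectratope_cone_compat_i {N I M : ℕ}
    (d : Fin I → ℕ)
    (S : (i : Fin I) → Fin N → Matrix (Fin (d i)) (Fin (d i)) ℝ)
    (hSsym : ∀ i j, (S i j).IsSymm)
    (R : Set (Fin I → ℝ)) (hRconv : Convex ℝ R) (hRcomp : IsCompact R)
    (hRpos : R ⊆ {r | ∀ i, 0 ≤ r i}) (hRint : (interior R).Nonempty)
    (hRmono : ∀ r ∈ R, ∀ r' : Fin I → ℝ, (∀ i, 0 ≤ r' i) → (∀ i, r' i ≤ r i) → r' ∈ R)
    (hnondeg : ∀ g : Fin N → ℝ, g ≠ 0 → ∃ i, (∑ j, g j • S i j) ≠ 0)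
    (lam : Fin M → ℝ) (g : Fin M → Fin N → ℝ)
    (hlam : ∀ j, 0 ≤ lam j)
    (hg : ∀ j, ∃ r ∈ R, ∀ i,
      ((r i • (1 : Matrix (Fin (d i)) (Fin (d i)) ℝ)) -
        (∑ p, g j p • S i p) * (∑ p, g j p • S i p)).PosSemidef) :
    (∑ j, lam j • Matrix.vecMulVec (g j) (g j)).PosSemidef ∧
      ∃ r ∈ R, ∀ i,
        (((∑ j, lam j) * r i) • (1 : Matrix (Fin (d i)) (Fin (d i)) ℝ) -
          ∑ p, ∑ q, (∑ j, lam j • Matrix.vecMulVec (g j) (g j)) p q • (S i p * S i q)).PosSemidef :=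
  spectratope_cone_compat_i_general d S R hRconv hRint lam g hlam hg
end

section
/- Let Z₁,...,Z_K be i.i.d. real random variables and m their common distribution's property that Prob{|Z_k| > 1} ≤ 1/8 for each k, with K ≥ 2.5 ln(M/ε) for given M ≥ 1 and ε ∈ (0,1). Then the median y = med{Z₁,...,Z_K} satisfies Prob{|y| > 1} ≤ (√7/4)^K ≤ ε/M. -/
open MeasureTheory ProbabilityTheory
open scoped Classical

/-!
If the median of `Z₁, …, Z_K` has absolute value above `1`, then at least `K / 2` of the events
`{|Z_k| > 1}` occur. These events are independent with probability at most `1 / 8`, so the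
Chernoff bound at `t = log 7` bounds the probability of this by `7^(-K/2) (1 + 6/8)^K = (√7/4)^K`.
Finally `√7/4 ≤ e^(-2/5)`, and `e^(-2K/5) ≤ ε / M` is the hypothesis on `K`.
-/

section

open Real Finset

lemma sqrt_seven_div_four_le_exp : √7 / 4 ≤ exp (-(2 / 5)) := by
  have hsq : (√7 / 4) ^ 2 ≤ exp (-(2 / 5)) ^ 2 := by
    have h : (19 / 20 : ℝ) ≤ exp (-(1 / 20)) := by linarith [add_one_le_exp (-(1 / 20))]
    calc (√7 / 4) ^ 2 = 7 / 16 := by rw [div_pow, sq_sqrt (by norm_num)]; norm_num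
      _ ≤ (19 / 20) ^ 16 := by norm_num
      _ ≤ exp (-(1 / 20)) ^ 16 := by gcongr
      _ = exp (-(2 / 5)) ^ 2 := by rw [← exp_nat_mul, ← exp_nat_mul]; norm_num
  exact (pow_le_pow_iff_left₀ (by positivity) (exp_nonneg _) two_ne_zero).mp hsq

lemma pow_le_inv_of_le_exp_neg {r c x : ℝ} {n : ℕ} (hr₀ : 0 ≤ r) (hr : r ≤ exp (-c)) (hx : 0 < x)
    (hn : log x ≤ c * n) : r ^ n ≤ x⁻¹ :=
  calc r ^ n ≤ exp (-c) ^ n := by gcongr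
    _ = exp (-(c * n)) := by rw [← exp_nat_mul]; ring_nf
    _ ≤ exp (-log x) := by gcongr
    _ = x⁻¹ := by rw [exp_neg, exp_log hx]

variable {ι : Type*} [Fintype ι]

lemma le_card_lt_abs_of_lt_abs_median {z : ι → ℝ} {y c r : ℝ}
    (hge : c ≤ #{i | y ≤ z i}) (hle : c ≤ #{i | z i ≤ y}) (hy : r < |y|) :
    c ≤ #{i | r < |z i|} := by
  rcases lt_abs.mp hy with h | h
  · exact hge.trans (mod_cast card_le_card (monotone_filter_right _ fun i _ hi =>
      h.trans_le (hi.trans (le_abs_self _))))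
  · exact hle.trans (mod_cast card_le_card (monotone_filter_right _ fun i _ hi =>
      h.trans_le ((neg_le_neg hi).trans (neg_le_abs _))))

variable {Ω : Type*} [MeasurableSpace Ω] {P : Measure Ω} [IsProbabilityMeasure P]

lemma mgf_indicator_one {A : Set Ω} (hA : MeasurableSet A) (t : ℝ) :
    mgf (A.indicator 1) P t = 1 + (exp t - 1) * P.real A := by
  have hexp : (fun ω => exp (t * A.indicator 1 ω)) =
      fun ω => 1 + A.indicator (fun _ => exp t - 1) ω := by
    funext ω
    by_cases h : ω ∈ A <;> simp [h]
  rw [mgf, hexp, integral_add (integrable_const 1) ((integrable_const _).indicator hA),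
    integral_indicator_const _ hA]
  simp [mul_comm]

lemma measureReal_le_card_le_of_iIndepFun_indicator {A : ι → Set Ω}
    (hA : ∀ i, MeasurableSet (A i)) (hindep : iIndepFun (fun i => (A i).indicator (1 : Ω → ℝ)) P)
    {p t : ℝ} (ht : 0 ≤ t) (hp : ∀ i, P.real (A i) ≤ p) (a : ℝ) :
    P.real {ω | a ≤ #{i | ω ∈ A i}} ≤
      exp (-t * a) * (1 + (exp t - 1) * p) ^ Fintype.card ι := by
  have hmeas : ∀ i, Measurable ((A i).indicator (1 : Ω → ℝ)) := fun i =>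
    measurable_const.indicator (hA i)
  have hcount : ∀ ω, (#{i | ω ∈ A i} : ℝ) = (∑ i, (A i).indicator (1 : Ω → ℝ)) ω := by
    intro ω
    simp [Finset.sum_apply, Set.indicator_apply, Finset.sum_boole]
  have hint : Integrable (fun ω => exp (t * (∑ i, (A i).indicator (1 : Ω → ℝ)) ω)) P :=
    hindep.integrable_exp_mul_sum hmeas fun i _ => integrable_exp_mul_of_le t 1 ht
      (hmeas i).aemeasurable (ae_of_all _ fun ω => Set.indicator_le_self' (by simp) ω)
  simp_rw [hcount]
  calc P.real {ω | a ≤ (∑ i, (A i).indicator (1 : Ω → ℝ)) ω}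
      ≤ exp (-t * a) * mgf (∑ i, (A i).indicator (1 : Ω → ℝ)) P t :=
        measure_ge_le_exp_mul_mgf a ht hint
    _ = exp (-t * a) * ∏ i, (1 + (exp t - 1) * P.real (A i)) := by
        rw [hindep.mgf_sum hmeas]
        simp_rw [mgf_indicator_one (hA _)]
    _ ≤ exp (-t * a) * (1 + (exp t - 1) * p) ^ Fintype.card ι := by
        have hexp : 0 ≤ exp t - 1 := by linarith [one_le_exp ht]
        rw [← Finset.card_univ, ← Finset.prod_const]
        gcongr with i
        exact hp i

lemma measureReal_half_le_card_le_sqrt_seven_div_four_pow {A : ι → Set Ω}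
    (hA : ∀ i, MeasurableSet (A i)) (hindep : iIndepFun (fun i => (A i).indicator (1 : Ω → ℝ)) P)
    (hp : ∀ i, P.real (A i) ≤ 1 / 8) :
    P.real {ω | (Fintype.card ι : ℝ) / 2 ≤ #{i | ω ∈ A i}} ≤ (√7 / 4) ^ Fintype.card ι := by
  refine (measureReal_le_card_le_of_iIndepFun_indicator hA hindep
    (log_nonneg (by norm_num : (1 : ℝ) ≤ 7)) hp _).trans_eq ?_
  set n := Fintype.card ι
  have hexp : exp (-log 7 * (n / 2)) = (√7)⁻¹ ^ n := by
    rw [show -log 7 * (n / 2) = n * -(log 7 / 2) by ring, exp_nat_mul, exp_neg, exp_half,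
      exp_log (by norm_num)]
  have h7 : √7 * √7 = 7 := mul_self_sqrt (by norm_num)
  rw [hexp, exp_log (by norm_num), ← mul_pow]
  congr 1
  field_simp
  linarith

end

theorem median_tail_bound_general {K : ℕ}
    {Ω : Type*} [MeasurableSpace Ω] (P : Measure Ω) [IsProbabilityMeasure P]
    (Z : Fin K → Ω → ℝ) (hmeas : ∀ k, Measurable (Z k))
    (hindep : iIndepFun Z P)
    (hp : ∀ k, P {ω | 1 < |Z k ω|} ≤ ENNReal.ofReal (1 / 8))
    (M ε : ℝ) (hM : 1 ≤ M) (hε : ε ∈ Set.Ioo (0 : ℝ) 1)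
    (hK : 2.5 * Real.log (M / ε) ≤ (K : ℝ))
    (y : Ω → ℝ)
    (hmed : ∀ ω,
      (K : ℝ) / 2 ≤ ((Finset.univ.filter (fun k => y ω ≤ Z k ω)).card : ℝ) ∧
      (K : ℝ) / 2 ≤ ((Finset.univ.filter (fun k => Z k ω ≤ y ω)).card : ℝ)) :
    P {ω | 1 < |y ω|} ≤ ENNReal.ofReal ((Real.sqrt 7 / 4) ^ K) ∧
      (Real.sqrt 7 / 4) ^ K ≤ ε / M := by
  refine ⟨?_, (pow_le_inv_of_le_exp_neg (by positivity) sqrt_seven_div_four_le_exp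
    (div_pos (by linarith) hε.1) (by linarith)).trans_eq (inv_div M ε)⟩
  set A : Fin K → Set Ω := fun k => {ω | 1 < |Z k ω|}
  have hA : ∀ k, MeasurableSet (A k) := fun k => measurableSet_lt measurable_const (hmeas k).abs
  have hindepA : iIndepFun (fun k => (A k).indicator (1 : Ω → ℝ)) P :=
    hindep.comp (fun _ => {x : ℝ | 1 < |x|}.indicator 1)
      fun _ => measurable_const.indicator (measurableSet_lt measurable_const measurable_abs)
  have hpA : ∀ k, P.real (A k) ≤ 1 / 8 := fun k =>
    ENNReal.toReal_le_of_le_ofReal (by norm_num) (hp k)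
  have hsub : {ω | 1 < |y ω|} ⊆ {ω | (K : ℝ) / 2 ≤ (Finset.univ.filter (ω ∈ A ·)).card} :=
    fun ω hω => le_card_lt_abs_of_lt_abs_median (hmed ω).1 (hmed ω).2 hω
  calc P {ω | 1 < |y ω|} = ENNReal.ofReal (P.real {ω | 1 < |y ω|}) :=
        (ofReal_measureReal (measure_ne_top P _)).symm
    _ ≤ ENNReal.ofReal (P.real _) := ENNReal.ofReal_le_ofReal (measureReal_mono hsub)
    _ ≤ ENNReal.ofReal ((Real.sqrt 7 / 4) ^ K) := ENNReal.ofReal_le_ofReal (by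
        simpa only [Fintype.card_fin] using
          measureReal_half_le_card_le_sqrt_seven_div_four_pow hA hindepA hpA)

theorem median_tail_bound {K : ℕ}
    {Ω : Type*} [MeasurableSpace Ω] (P : Measure Ω) [IsProbabilityMeasure P]
    (Z : Fin K → Ω → ℝ) (hmeas : ∀ k, Measurable (Z k))
    (hindep : iIndepFun Z P)
    (hident : ∀ k k', IdentDistrib (Z k) (Z k') P P)
    (hp : ∀ k, P {ω | 1 < |Z k ω|} ≤ ENNReal.ofReal (1 / 8))
    (M ε : ℝ) (hM : 1 ≤ M) (hε : ε ∈ Set.Ioo (0 : ℝ) 1)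
    (hK : 2.5 * Real.log (M / ε) ≤ (K : ℝ))
    (y : Ω → ℝ)
    (hmed : ∀ ω,
      (K : ℝ) / 2 ≤ ((Finset.univ.filter (fun k => y ω ≤ Z k ω)).card : ℝ) ∧
      (K : ℝ) / 2 ≤ ((Finset.univ.filter (fun k => Z k ω ≤ y ω)).card : ℝ)) :
    P {ω | 1 < |y ω|} ≤ ENNReal.ofReal ((Real.sqrt 7 / 4) ^ K) ∧
      (Real.sqrt 7 / 4) ^ K ≤ ε / M :=
  median_tail_bound_general P Z hmeas hindep hp M ε hM hε hK y hmed
end
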